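/- For all real (v,u): (a) for every integer p ≥ 0, v·∂θ_{2,p}/∂v + 2·∂θ_{2,p}/∂u = (p+1)·θ_{2,p}; and (b) for every integer p ≥ 1, v·∂θ_{1,p}/∂v + 2·∂θ_{1,p}/∂u = p·θ_{1,p} + 2·θ_{2,p−1}. That is, the action of the Euler vector field E = v∂_v + 2∂_u on the functions θ_{α,p} is quasihomogeneous of degree p + μ_α + 1/2 up to the resonance term given by the matrix R (R^2_1 = 2 being its only nonzero entry). -/

import Mathlib

/-!
The dispersionless Hamiltonian densities `θ_{α,p}(v,u)` of the extended Toda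
hierarchy and their partial derivatives.
-/

noncomputable section Toda

/-- The harmonic number `H_m = Σ_{j=1}^m 1/j`. -/
def harm (m : ℕ) : ℝ := ∑ j ∈ Finset.Icc 1 m, (1 : ℝ) / (j : ℝ)

/-- `θ_{2,p}(v,u) = Σ_{2m ≤ p+1} e^{mu} v^{p+1−2m} / ((m!)² (p+1−2m)!)`. -/
def theta2 (p : ℕ) (v u : ℝ) : ℝ :=
  ∑ m ∈ Finset.range ((p + 1) / 2 + 1),
    Real.exp (m * u) * v ^ (p + 1 - 2 * m) /
      ((Nat.factorial m : ℝ) ^ 2 * (Nat.factorial (p + 1 - 2 * m) : ℝ))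

/-- `θ_{1,p}(v,u) = −2 Σ_{2m ≤ p} (H_m − u/2) e^{mu} v^{p−2m} / ((m!)² (p−2m)!)`. -/
def theta1 (p : ℕ) (v u : ℝ) : ℝ :=
  -2 * ∑ m ∈ Finset.range (p / 2 + 1),
    (harm m - u / 2) * Real.exp (m * u) * v ^ (p - 2 * m) /
      ((Nat.factorial m : ℝ) ^ 2 * (Nat.factorial (p - 2 * m) : ℝ))

/-- Partial derivative in the first variable `v`. -/
def dv (f : ℝ → ℝ → ℝ) (v u : ℝ) : ℝ := deriv (fun v' => f v' u) v

/-- Partial derivative in the second variable `u`. -/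
def du (f : ℝ → ℝ → ℝ) (v u : ℝ) : ℝ := deriv (fun u' => f v u') u

/-!
The Euler field `E = v ∂_v + 2 ∂_u` is a derivation, so it multiplies each monomial
`e^{mu} v^k` by its weight `k + 2m`. Every monomial of `θ_{2,p}` has weight `p + 1`, which
gives (a). In `θ_{1,p}` the extra factor `H_m − u/2` satisfies `E (H_m − u/2) = −1`, and the
terms this produces add up to `2 θ_{2,p−1}`, which gives (b).
-/

def euler (f : ℝ → ℝ → ℝ) (v u : ℝ) : ℝ := v * dv f v u + 2 * du f v u

lemma Nat.cast_sub_two_mul_add_two_mul {R : Type*} [Ring R] {n m : ℕ} (h : 2 * m ≤ n) :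
    ((n - 2 * m : ℕ) : R) + 2 * m = n := by
  rw [Nat.cast_sub h]
  push_cast
  abel

section Euler

variable {v u : ℝ}

lemma euler_sum {ι : Type*} (s : Finset ι) (f : ι → ℝ → ℝ → ℝ)
    (hv : ∀ i ∈ s, DifferentiableAt ℝ (fun v' => f i v' u) v)
    (hu : ∀ i ∈ s, DifferentiableAt ℝ (f i v) u) :
    euler (fun v u => ∑ i ∈ s, f i v u) v u = ∑ i ∈ s, euler (f i) v u := by
  simp only [euler, dv, du, deriv_fun_sum hv, deriv_fun_sum hu, Finset.mul_sum,
    Finset.sum_add_distrib]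

lemma euler_const_mul (c : ℝ) (f : ℝ → ℝ → ℝ) :
    euler (fun v u => c * f v u) v u = c * euler f v u := by
  simp only [euler, dv, du, deriv_const_mul_field]
  ring

lemma euler_div_const (f : ℝ → ℝ → ℝ) (c : ℝ) :
    euler (fun v u => f v u / c) v u = euler f v u / c := by
  simp only [euler, dv, du, deriv_div_const]
  ring

lemma euler_mul (f g : ℝ → ℝ → ℝ)
    (hfv : DifferentiableAt ℝ (fun v' => f v' u) v) (hgv : DifferentiableAt ℝ (fun v' => g v' u) v)
    (hfu : DifferentiableAt ℝ (f v) u) (hgu : DifferentiableAt ℝ (g v) u) :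
    euler (fun v u => f v u * g v u) v u = euler f v u * g v u + f v u * euler g v u := by
  simp only [euler, dv, du, deriv_fun_mul hfv hgv, deriv_fun_mul hfu hgu]
  ring

lemma euler_pow (k : ℕ) : euler (fun v _ => v ^ k) v u = k * v ^ k := by
  simp only [euler, dv, du, (hasDerivAt_pow k v).deriv, deriv_const]
  cases k with
  | zero => simp
  | succ k => rw [Nat.add_sub_cancel, pow_succ]; push_cast; ring

lemma euler_exp_mul (m : ℝ) :
    euler (fun _ u => Real.exp (m * u)) v u = 2 * m * Real.exp (m * u) := by
  have hexp : HasDerivAt (fun u' => Real.exp (m * u')) (Real.exp (m * u) * m) u := by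
    simpa using ((hasDerivAt_id u).const_mul m).exp
  simp only [euler, dv, du, deriv_const, hexp.deriv]
  ring

lemma euler_sub_div_two (a : ℝ) : euler (fun _ u => a - u / 2) v u = -1 := by
  simp [euler, dv, du]

lemma euler_exp_mul_pow (m : ℝ) (k : ℕ) :
    euler (fun v u => Real.exp (m * u) * v ^ k) v u
      = (k + 2 * m) * (Real.exp (m * u) * v ^ k) := by
  rw [euler_mul (fun _ u => Real.exp (m * u)) (fun v _ => v ^ k) (by fun_prop) (by fun_prop)
    (by fun_prop) (by fun_prop), euler_exp_mul, euler_pow]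
  ring

lemma euler_sub_div_two_mul_exp_mul_pow (a m : ℝ) (k : ℕ) :
    euler (fun v u => (a - u / 2) * Real.exp (m * u) * v ^ k) v u
      = (k + 2 * m) * ((a - u / 2) * Real.exp (m * u) * v ^ k) - Real.exp (m * u) * v ^ k := by
  rw [euler_mul (fun _ u => (a - u / 2) * Real.exp (m * u)) (fun v _ => v ^ k) (by fun_prop)
    (by fun_prop) (by fun_prop) (by fun_prop), euler_mul (fun _ u => a - u / 2)
    (fun _ u => Real.exp (m * u)) (by fun_prop) (by fun_prop) (by fun_prop) (by fun_prop),
    euler_sub_div_two, euler_exp_mul, euler_pow]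
  ring

lemma euler_theta2 (p : ℕ) : euler (theta2 p) v u = (p + 1) * theta2 p v u := by
  unfold theta2
  rw [euler_sum _ _ (fun _ _ => by fun_prop) (fun _ _ => by fun_prop), Finset.mul_sum]
  refine Finset.sum_congr rfl fun m hm => ?_
  rw [euler_div_const, euler_exp_mul_pow, Nat.cast_sub_two_mul_add_two_mul (by grind)]
  push_cast
  ring

lemma euler_theta1 (p : ℕ) (hp : 1 ≤ p) :
    euler (theta1 p) v u = p * theta1 p v u + 2 * theta2 (p - 1) v u := by
  obtain ⟨q, rfl⟩ := Nat.exists_eq_add_of_le' hp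
  unfold theta1 theta2
  rw [euler_const_mul, euler_sum _ _ (fun _ _ => by fun_prop) (fun _ _ => by fun_prop),
    Nat.add_sub_cancel]
  simp only [Finset.mul_sum, ← Finset.sum_add_distrib]
  refine Finset.sum_congr rfl fun m hm => ?_
  rw [euler_div_const, euler_sub_div_two_mul_exp_mul_pow,
    Nat.cast_sub_two_mul_add_two_mul (by grind)]
  ring

end Euler

/-- Quasihomogeneity of the `θ_{α,p}` under the Euler vector field `E = v∂_v + 2∂_u`:
(a) `E θ_{2,p} = (p+1) θ_{2,p}` for `p ≥ 0`; and
(b) `E θ_{1,p} = p θ_{1,p} + 2 θ_{2,p−1}` for `p ≥ 1`. -/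
theorem theta_euler_quasihomogeneity (v u : ℝ) :
    (∀ p : ℕ, v * dv (theta2 p) v u + 2 * du (theta2 p) v u
        = ((p : ℝ) + 1) * theta2 p v u) ∧
    (∀ p : ℕ, 1 ≤ p → v * dv (theta1 p) v u + 2 * du (theta1 p) v u
        = (p : ℝ) * theta1 p v u + 2 * theta2 (p - 1) v u) :=
  ⟨fun p => euler_theta2 p, fun p hp => euler_theta1 p hp⟩

end Toda
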